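/- arXiv:2301.03764 — 3 statements merged into one kernel-verified Lean document; each statement's English description precedes it below -/
import Mathlib

section
/- Let Np ≥ 1 and R_G, R_F ∈ ℂ, and let E = I − M_G⁻¹M_F be the (Np+1)×(Np+1) Parareal error matrix, where M_G and M_F are the unit lower bidiagonal matrices with ones on the diagonal and −R_G (respectively −R_F) on the first subdiagonal. Then the ∞-norm of E (the maximum over rows of the sum of the absolute values of the entries) equals |R_G − R_F| · Σ_{j=0}^{Np−1} |R_G|^j; in particular, if |R_G| ≠ 1 then ‖E‖_∞ = ((1 − |R_G|^{Np})/(1 − |R_G|)) · |R_G − R_F|, and if |R_G| = 1 then ‖E‖_∞ = Np · |R_G − R_F|. -/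
/-- The `(N+1)×(N+1)` unit lower bidiagonal matrix with ones on the diagonal and `-R` on
the first subdiagonal. -/
noncomputable def pararealBidiag (N : ℕ) (R : ℂ) : Matrix (Fin (N + 1)) (Fin (N + 1)) ℂ :=
  Matrix.of fun i j => if i = j then 1 else if (i : ℕ) = (j : ℕ) + 1 then -R else 0

/-- The ∞-norm of a matrix: the maximum over rows of the sum of the absolute values of
the entries. -/
noncomputable def rowSumNorm {N : ℕ} (A : Matrix (Fin (N + 1)) (Fin (N + 1)) ℂ) : ℝ :=
  Finset.univ.sup' Finset.univ_nonempty fun i => ∑ j, ‖A i j‖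

/-! The bidiagonal matrix is `M_R = 1 - R • S` with `S` the subdiagonal shift, and its inverse is
the lower triangular Toeplitz matrix `P_R` with entries `R ^ (i - j)`. Hence
`E = M_G⁻¹ (M_G - M_F) = (R_F - R_G) • P_{R_G} S` has entries `(R_F - R_G) R_G ^ (i - j - 1)`
strictly below the diagonal, so row `i` has absolute sum `|R_G - R_F| ∑_{m < i} |R_G| ^ m`, which
grows with `i` and is largest in the last row `i = Np`. -/

open Matrix Finset

theorem Fin.sum_univ_ite_lt_eq_sum_range {M : Type*} [AddCommMonoid M] {n i : ℕ} (hi : i ≤ n)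
    (f : ℕ → M) :
    ∑ j : Fin n, (if (j : ℕ) < i then f (i - j - 1) else 0) = ∑ m ∈ range i, f m := by
  have hfilter : {j ∈ range n | j < i} = range i := by
    ext j
    simp only [mem_filter, mem_range]
    omega
  rw [Fin.sum_univ_eq_sum_range (fun j => if j < i then f (i - j - 1) else 0), ← sum_filter,
    hfilter, ← sum_range_reflect f i]
  exact sum_congr rfl fun j _ => congrArg f (by omega)

namespace Parareal

def subdiag (α : Type*) [Zero α] [One α] (N : ℕ) : Matrix (Fin (N + 1)) (Fin (N + 1)) α :=
  Matrix.of fun i j => if (i : ℕ) = j + 1 then 1 else 0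

variable {α : Type*}

def lowerPowMatrix [MonoidWithZero α] (N : ℕ) (r : α) : Matrix (Fin (N + 1)) (Fin (N + 1)) α :=
  Matrix.of fun i j => if (j : ℕ) ≤ i then r ^ ((i : ℕ) - j) else 0

theorem mul_subdiag_apply [NonAssocSemiring α] {N : ℕ}
    (A : Matrix (Fin (N + 1)) (Fin (N + 1)) α) (i j : Fin (N + 1)) :
    (A * subdiag α N) i j = if h : (j : ℕ) + 1 < N + 1 then A i ⟨j + 1, h⟩ else 0 := by
  simp only [Matrix.mul_apply, subdiag, of_apply, mul_ite, mul_one, mul_zero]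
  split_ifs with h
  · have hk (k : Fin (N + 1)) : (k : ℕ) = j + 1 ↔ k = ⟨j + 1, h⟩ :=
      (Fin.ext_iff (b := ⟨j + 1, h⟩)).symm
    simp only [hk, sum_ite_eq', mem_univ, if_true]
  · exact sum_eq_zero fun k _ => if_neg fun hk : (k : ℕ) = j + 1 => h (hk ▸ k.is_lt)

theorem lowerPowMatrix_mul_subdiag_apply [Semiring α] (N : ℕ) (r : α) (i j : Fin (N + 1)) :
    (lowerPowMatrix N r * subdiag α N) i j =
      if (j : ℕ) < i then r ^ ((i : ℕ) - j - 1) else 0 := by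
  rw [mul_subdiag_apply]
  simp only [lowerPowMatrix, of_apply]
  split_ifs <;> first | rfl | omega

theorem lowerPowMatrix_mul_one_sub_smul_subdiag [CommRing α] (N : ℕ) (r : α) :
    lowerPowMatrix N r * (1 - r • subdiag α N) = 1 := by
  ext i j
  rw [mul_sub, mul_one, mul_smul_comm, Matrix.sub_apply, Matrix.smul_apply,
    lowerPowMatrix_mul_subdiag_apply]
  simp only [lowerPowMatrix, of_apply, one_apply, ← Fin.val_inj, smul_eq_mul]
  rcases lt_trichotomy (j : ℕ) i with hji | hji | hij
  · obtain ⟨k, hk⟩ : ∃ k, (i : ℕ) - j = k + 1 :=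
      ⟨_, (Nat.succ_pred_eq_of_pos (Nat.sub_pos_of_lt hji)).symm⟩
    simp [hji, hji.le, hji.ne', hk, pow_succ']
  · simp [hji]
  · simp [hij.not_ge, hij.ne, hij.not_gt]

theorem pararealBidiag_eq (N : ℕ) (R : ℂ) : pararealBidiag N R = 1 - R • subdiag ℂ N := by
  ext i j
  simp only [pararealBidiag, subdiag, of_apply, Matrix.sub_apply, Matrix.smul_apply, one_apply,
    smul_eq_mul]
  split_ifs <;> simp_all

theorem inv_pararealBidiag (N : ℕ) (R : ℂ) : (pararealBidiag N R)⁻¹ = lowerPowMatrix N R :=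
  inv_eq_left_inv (pararealBidiag_eq N R ▸ lowerPowMatrix_mul_one_sub_smul_subdiag N R)

theorem one_sub_inv_pararealBidiag_mul (N : ℕ) (RG RF : ℂ) :
    1 - (pararealBidiag N RG)⁻¹ * pararealBidiag N RF =
      (RF - RG) • (lowerPowMatrix N RG * subdiag ℂ N) := by
  have hinv : (pararealBidiag N RG)⁻¹ * pararealBidiag N RG = 1 := by
    rw [inv_pararealBidiag, pararealBidiag_eq]
    exact lowerPowMatrix_mul_one_sub_smul_subdiag N RG
  rw [← hinv, ← mul_sub, inv_pararealBidiag, pararealBidiag_eq, pararealBidiag_eq,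
    sub_sub_sub_cancel_left, ← sub_smul, mul_smul_comm]

theorem sum_norm_one_sub_inv_pararealBidiag_mul (N : ℕ) (RG RF : ℂ) (i : Fin (N + 1)) :
    ∑ j, ‖(1 - (pararealBidiag N RG)⁻¹ * pararealBidiag N RF) i j‖ =
      ‖RG - RF‖ * ∑ m ∈ range i, ‖RG‖ ^ m := by
  simp only [one_sub_inv_pararealBidiag_mul, Matrix.smul_apply, lowerPowMatrix_mul_subdiag_apply,
    smul_eq_mul, norm_mul, apply_ite norm, norm_pow, norm_zero, norm_sub_rev RF RG]
  rw [← mul_sum, Fin.sum_univ_ite_lt_eq_sum_range i.is_lt.le (‖RG‖ ^ ·)]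

theorem rowSumNorm_eq_of_monotone {N : ℕ} {A : Matrix (Fin (N + 1)) (Fin (N + 1)) ℂ}
    {f : ℕ → ℝ} (hf : Monotone f) (hA : ∀ i, ∑ j, ‖A i j‖ = f i) : rowSumNorm A = f N := by
  refine le_antisymm (sup'_le _ _ fun i _ => ?_) ?_
  · exact (hA i).trans_le (hf i.is_le)
  · calc f N = ∑ j, ‖A (Fin.last N) j‖ := by rw [hA, Fin.val_last]
      _ ≤ rowSumNorm A := le_sup' (fun i => ∑ j, ‖A i j‖) (mem_univ _)

end Parareal

open Parareal

theorem parareal_error_matrix_inf_norm_general (Np : ℕ) (RG RF : ℂ)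
    (MG MF : Matrix (Fin (Np + 1)) (Fin (Np + 1)) ℂ)
    (hMG : MG = pararealBidiag Np RG) (hMF : MF = pararealBidiag Np RF)
    (E : Matrix (Fin (Np + 1)) (Fin (Np + 1)) ℂ) (hE : E = 1 - MG⁻¹ * MF) :
    rowSumNorm E = ‖RG - RF‖ * ∑ j ∈ Finset.range Np, ‖RG‖ ^ j ∧
    (‖RG‖ ≠ 1 →
      rowSumNorm E =
        (1 - ‖RG‖ ^ Np) / (1 - ‖RG‖) * ‖RG - RF‖) ∧
    (‖RG‖ = 1 → rowSumNorm E = Np * ‖RG - RF‖) := by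
  subst hMG hMF hE
  have hmono : Monotone fun n => ‖RG - RF‖ * ∑ m ∈ range n, ‖RG‖ ^ m := fun _ _ hmn =>
    mul_le_mul_of_nonneg_left
      (sum_mono_set_of_nonneg (fun _ => by positivity) (range_mono hmn)) (norm_nonneg _)
  have hnorm : rowSumNorm (1 - (pararealBidiag Np RG)⁻¹ * pararealBidiag Np RF) =
      ‖RG - RF‖ * ∑ m ∈ range Np, ‖RG‖ ^ m :=
    rowSumNorm_eq_of_monotone hmono (sum_norm_one_sub_inv_pararealBidiag_mul Np RG RF)
  refine ⟨hnorm, fun hRG => ?_, fun hRG => ?_⟩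
  · rw [hnorm, ← Nat.Ico_zero_eq_range, geom_sum_Ico' hRG (Nat.zero_le Np), pow_zero,
      mul_comm]
  · simp [hnorm, hRG, mul_comm]

theorem parareal_error_matrix_inf_norm (Np : ℕ) (hNp : 1 ≤ Np) (RG RF : ℂ)
    (MG MF : Matrix (Fin (Np + 1)) (Fin (Np + 1)) ℂ)
    (hMG : MG = pararealBidiag Np RG) (hMF : MF = pararealBidiag Np RF)
    (E : Matrix (Fin (Np + 1)) (Fin (Np + 1)) ℂ) (hE : E = 1 - MG⁻¹ * MF) :
    rowSumNorm E = ‖RG - RF‖ * ∑ j ∈ Finset.range Np, ‖RG‖ ^ j ∧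
    (‖RG‖ ≠ 1 →
      rowSumNorm E =
        (1 - ‖RG‖ ^ Np) / (1 - ‖RG‖) * ‖RG - RF‖) ∧
    (‖RG‖ = 1 → rowSumNorm E = Np * ‖RG - RF‖) :=
  parareal_error_matrix_inf_norm_general Np RG RF MG MF hMG hMF E hE
end

section
/- Let Np ≥ 1 and R_G, R_F ∈ ℂ, and let E = I − M_G⁻¹M_F be the (Np+1)×(Np+1) Parareal error matrix, where M_G and M_F are the unit lower bidiagonal matrices with ones on the diagonal and −R_G (respectively −R_F) on the first subdiagonal. Then ‖E‖_∞ ≤ Np · max(1, |R_G|)^{Np−1} · |R_G − R_F|, where ‖E‖_∞ is the maximum absolute row sum of E. -/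
/-!
Writing `M_G - M_F = (R_F - R_G) S` with `S` the subdiagonal shift, the error matrix is
`E = M_G⁻¹ (M_G - M_F)`, and solving the bidiagonal system `M_G E = M_G - M_F` row by row
shows that `E` is strictly lower triangular with entries `(R_F - R_G) R_G^(i-j-1)`.
Row `i` therefore has `i ≤ Np` nonzero entries, each of modulus at most
`max 1 |R_G| ^ (Np - 1) · |R_G - R_F|`.
-/

open Finset

noncomputable def pararealError (N : ℕ) (RG RF : ℂ) : Matrix (Fin (N + 1)) (Fin (N + 1)) ℂ :=
  Matrix.of fun i j => if j < i then (RF - RG) * RG ^ ((i : ℕ) - j - 1) else 0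

section Bidiag

variable {N : ℕ} (R : ℂ) (A : Matrix (Fin (N + 1)) (Fin (N + 1)) ℂ)

lemma pararealBidiag_isLowerTriangular : (pararealBidiag N R).IsLowerTriangular := by
  intro i j hij
  have hij : (i : ℕ) < j := hij
  simp only [pararealBidiag, Matrix.of_apply]
  rw [if_neg (by omega), if_neg (by omega)]

lemma det_pararealBidiag : (pararealBidiag N R).det = 1 := by
  rw [Matrix.det_of_isLowerTriangular _ (pararealBidiag_isLowerTriangular R)]
  simp [pararealBidiag]

lemma pararealBidiag_mul_apply_zero (j : Fin (N + 1)) :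
    (pararealBidiag N R * A) 0 j = A 0 j := by
  rw [Matrix.mul_apply, Finset.sum_eq_single 0]
  · simp [pararealBidiag]
  · intro k _ hk
    simp [pararealBidiag, Ne.symm hk]
  · simp

lemma pararealBidiag_mul_apply_succ (i : Fin N) (j : Fin (N + 1)) :
    (pararealBidiag N R * A) i.succ j = A i.succ j - R * A i.castSucc j := by
  rw [Matrix.mul_apply, Fintype.sum_eq_add i.succ i.castSucc (Fin.castSucc_lt_succ).ne']
  · simp [pararealBidiag, (Fin.castSucc_lt_succ (i := i)).ne', sub_eq_add_neg]
  · rintro k ⟨hk, hk'⟩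
    have : (i : ℕ) ≠ k := fun h => hk' (Fin.ext h.symm)
    simp [pararealBidiag, Ne.symm hk, this]

end Bidiag

lemma pararealBidiag_mul_pararealError (N : ℕ) (RG RF : ℂ) :
    pararealBidiag N RG * pararealError N RG RF = pararealBidiag N RG - pararealBidiag N RF := by
  ext i j
  cases i using Fin.cases with
  | zero =>
    rw [pararealBidiag_mul_apply_zero]
    simp [pararealError, pararealBidiag]
  | succ i =>
    rw [pararealBidiag_mul_apply_succ]
    simp only [pararealError, pararealBidiag, Matrix.of_apply, Matrix.sub_apply, Fin.lt_def,
      Fin.val_succ, Fin.val_castSucc, Fin.ext_iff]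
    rcases lt_trichotomy (j : ℕ) i with hji | hji | hji
    · obtain ⟨d, hd⟩ : ∃ d, (i : ℕ) - j = d + 1 := ⟨i - j - 1, by omega⟩
      have hne : (i : ℕ) + 1 ≠ j := by omega
      have hne' : (i : ℕ) + 1 ≠ j + 1 := by omega
      simp only [hji, show (j : ℕ) < i + 1 by omega, hne, hne', if_true, if_false, sub_self]
      rw [show (i : ℕ) + 1 - j - 1 = d + 1 by omega, show (i : ℕ) - j - 1 = d by omega]
      ring
    · simp [hji]
      ring
    · have hne' : (i : ℕ) + 1 ≠ j + 1 := by omega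
      simp only [show ¬ (j : ℕ) < i + 1 by omega, show ¬ (j : ℕ) < i by omega, hne', if_false]
      split_ifs <;> simp

lemma one_sub_inv_mul_pararealBidiag (N : ℕ) (RG RF : ℂ) :
    1 - (pararealBidiag N RG)⁻¹ * pararealBidiag N RF = pararealError N RG RF := by
  have hdet : IsUnit (pararealBidiag N RG).det := by simp [det_pararealBidiag]
  calc 1 - (pararealBidiag N RG)⁻¹ * pararealBidiag N RF
      = (pararealBidiag N RG)⁻¹ * (pararealBidiag N RG - pararealBidiag N RF) := by
        rw [Matrix.mul_sub, Matrix.nonsing_inv_mul _ hdet]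
    _ = pararealError N RG RF := by
        rw [← pararealBidiag_mul_pararealError, Matrix.nonsing_inv_mul_cancel_left _ _ hdet]

lemma rowSumNorm_le_of_strictLowerTriangular {N : ℕ} {A : Matrix (Fin (N + 1)) (Fin (N + 1)) ℂ}
    {C : ℝ} (hzero : ∀ i j, i ≤ j → A i j = 0) (hle : ∀ i j, ‖A i j‖ ≤ C) :
    rowSumNorm A ≤ N * C := by
  refine Finset.sup'_le _ _ fun i _ => ?_
  calc ∑ j, ‖A i j‖ = ∑ j ∈ Iio i, ‖A i j‖ := by
        refine (Finset.sum_subset (subset_univ _) fun j _ hj => ?_).symm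
        rw [hzero i j (not_lt.mp (by simpa using hj)), norm_zero]
    _ ≤ (i : ℕ) * C := by
        simpa [Fin.card_Iio] using Finset.sum_le_card_nsmul (Iio i) _ C fun j _ => hle i j
    _ ≤ N * C := by
        gcongr
        · exact (norm_nonneg _).trans (hle i i)
        · exact_mod_cast i.is_le

lemma norm_pararealError_apply_le {N : ℕ} (RG RF : ℂ) (i j : Fin (N + 1)) :
    ‖pararealError N RG RF i j‖ ≤ max 1 ‖RG‖ ^ (N - 1) * ‖RG - RF‖ := by
  simp only [pararealError, Matrix.of_apply]
  split_ifs with hji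
  · rw [norm_mul, norm_pow, norm_sub_rev, mul_comm]
    gcongr
    calc ‖RG‖ ^ ((i : ℕ) - j - 1) ≤ max 1 ‖RG‖ ^ ((i : ℕ) - j - 1) := by
          gcongr; exact le_max_right _ _
      _ ≤ max 1 ‖RG‖ ^ (N - 1) := pow_le_pow_right₀ (le_max_left _ _) (by omega)
  · rw [norm_zero]; positivity

theorem parareal_error_matrix_inf_norm_bound_general (Np : ℕ) (RG RF : ℂ)
    (MG MF : Matrix (Fin (Np + 1)) (Fin (Np + 1)) ℂ)
    (hMG : MG = pararealBidiag Np RG) (hMF : MF = pararealBidiag Np RF)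
    (E : Matrix (Fin (Np + 1)) (Fin (Np + 1)) ℂ) (hE : E = 1 - MG⁻¹ * MF) :
    rowSumNorm E ≤
      Np * max 1 ‖RG‖ ^ (Np - 1) * ‖RG - RF‖ := by
  subst hMG hMF hE
  rw [one_sub_inv_mul_pararealBidiag, mul_assoc]
  refine rowSumNorm_le_of_strictLowerTriangular (fun i j hij => ?_)
    (norm_pararealError_apply_le RG RF)
  simp [pararealError, not_lt.mpr hij]

theorem parareal_error_matrix_inf_norm_bound (Np : ℕ) (hNp : 1 ≤ Np) (RG RF : ℂ)
    (MG MF : Matrix (Fin (Np + 1)) (Fin (Np + 1)) ℂ)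
    (hMG : MG = pararealBidiag Np RG) (hMF : MF = pararealBidiag Np RF)
    (E : Matrix (Fin (Np + 1)) (Fin (Np + 1)) ℂ) (hE : E = 1 - MG⁻¹ * MF) :
    rowSumNorm E ≤
      Np * max 1 ‖RG‖ ^ (Np - 1) * ‖RG - RF‖ :=
  parareal_error_matrix_inf_norm_bound_general Np RG RF MG MF hMG hMF E hE
end

section
/- Let Np ≥ 1, Ng ≥ 1, q ≥ 1, C₁, C₂ ≥ 0, and r₁, r₂ ≥ 0, and set θ = (r₁ + r₂)/Ng. Let R_G, R_F ∈ ℂ satisfy |R_G| ≤ 1 + C₁·θ^q and |R_G − R_F| ≤ C₂·θ^q, and let E = I − M_G⁻¹M_F be the (Np+1)×(Np+1) Parareal error matrix built from R_G and R_F (M_G, M_F unit lower bidiagonal with −R_G, −R_F on the first subdiagonal). Then ‖E‖_∞ ≤ Np · C₂ · θ^q · (1 + C₁·θ^q)^{Np−1}. In particular, if Np · C₂ · θ^q · (1 + C₁·θ^q)^{Np−1} < 1 then ‖E‖_∞ < 1 and the Parareal error decreases monotonically, so for fixed (r₁, r₂) the bound on ‖E‖_∞ scales like O(1/Ng^q)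 and the guaranteed convergence region grows with Ng. -/
/-!
Write the bidiagonal propagator matrices as `1 - R • S`, with `S` the nilpotent subdiagonal
shift. Then `(1 - R_G • S)⁻¹` is the finite geometric series `∑ R_Gᵏ • Sᵏ`, and the error matrix
becomes `E = (R_F - R_G) • ∑_{k < Np} R_Gᵏ • Sᵏ⁺¹`. Every power of `S` has row sums at most `1`,
so `‖E‖_∞ ≤ |R_G - R_F| · ∑_{k < Np} |R_G|ᵏ`, and the hypotheses bound each of the `Np` terms
of the sum by `(1 + C₁ θ^q)^(Np - 1)`.
-/

open Finset Matrix
open scoped Matrix.Norms.Operator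

namespace Matrix

def shift (n : ℕ) (α : Type*) [Zero α] [One α] : Matrix (Fin n) (Fin n) α :=
  of fun i j => if (i : ℕ) = j + 1 then 1 else 0

variable {α : Type*}

theorem shift_pow_apply [Semiring α] (n k : ℕ) (i j : Fin n) :
    (shift n α ^ k) i j = if (i : ℕ) = j + k then 1 else 0 := by
  induction k generalizing j with
  | zero => simp [one_apply, Fin.ext_iff]
  | succ k ih =>
    simp only [pow_succ, mul_apply, ih]
    simp only [shift, of_apply, ite_mul, one_mul, zero_mul, ← ite_and]
    by_cases h : (i : ℕ) = j + (k + 1)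
    · rw [if_pos h, sum_eq_single_of_mem ⟨j + 1, by omega⟩ (mem_univ _) fun l _ hl =>
        if_neg fun h' => hl (Fin.ext (by simp; omega)), if_pos (by simp; omega)]
    · exact (sum_eq_zero fun l _ => if_neg (by omega)).trans (if_neg h).symm

theorem shift_pow_eq_zero [Semiring α] {n k : ℕ} (hk : n ≤ k) : shift n α ^ k = 0 := by
  ext i j
  rw [shift_pow_apply, if_neg (by omega), zero_apply]

theorem linfty_opNorm_shift_pow_le [NormedRing α] [NormOneClass α] (n k : ℕ) :
    ‖shift n α ^ k‖ ≤ 1 := by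
  rw [linfty_opNorm_def]
  simp only [shift_pow_apply, apply_ite nnnorm, nnnorm_one, nnnorm_zero, sum_boole]
  norm_cast
  exact Finset.sup_le fun i _ =>
    card_le_one.mpr fun a ha b hb => Fin.ext (by simp only [mem_filter] at ha hb; omega)

end Matrix

theorem rowSumNorm_eq_linfty_opNorm {N : ℕ} (A : Matrix (Fin (N + 1)) (Fin (N + 1)) ℂ) :
    rowSumNorm A = ‖A‖ := by
  rw [linfty_opNorm_def, ← sup'_eq_sup univ_nonempty,
    univ.apply_sup'_eq_sup'_comp univ_nonempty _ NNReal.coe_max]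
  simp [rowSumNorm, Function.comp_def]

theorem pararealBidiag_eq_one_sub_smul_shift (N : ℕ) (R : ℂ) :
    pararealBidiag N R = 1 - R • shift (N + 1) ℂ := by
  ext i j
  simp only [pararealBidiag, shift, of_apply, Matrix.sub_apply, one_apply, Matrix.smul_apply]
  split_ifs <;> simp_all

theorem one_sub_inv_pararealBidiag_mul (N : ℕ) (RG RF : ℂ) :
    1 - (pararealBidiag N RG)⁻¹ * pararealBidiag N RF =
      (RF - RG) • ∑ k ∈ range N, RG ^ k • shift (N + 1) ℂ ^ (k + 1) := by
  set S := shift (N + 1) ℂ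
  have hS : S ^ (N + 1) = 0 := shift_pow_eq_zero le_rfl
  set P := ∑ k ∈ range (N + 1), (RG • S) ^ k
  have hP : P * (1 - RG • S) = 1 := by
    rw [geom_sum_mul_neg, smul_pow, hS, smul_zero, sub_zero]
  rw [pararealBidiag_eq_one_sub_smul_shift, pararealBidiag_eq_one_sub_smul_shift,
    inv_eq_left_inv hP]
  calc 1 - P * (1 - RF • S) = P * (1 - RG • S) - P * (1 - RF • S) := by rw [hP]
    _ = P * ((RF - RG) • S) := by rw [← mul_sub, sub_sub_sub_cancel_left, sub_smul]
    _ = (RF - RG) • ∑ k ∈ range (N + 1), RG ^ k • S ^ (k + 1) := by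
        simp only [P, mul_smul_comm, sum_mul, smul_pow, smul_mul_assoc, pow_succ]
    _ = (RF - RG) • ∑ k ∈ range N, RG ^ k • S ^ (k + 1) := by
        rw [sum_range_succ, hS, smul_zero, add_zero]

theorem linfty_opNorm_one_sub_inv_pararealBidiag_mul_le (N : ℕ) (RG RF : ℂ) :
    ‖1 - (pararealBidiag N RG)⁻¹ * pararealBidiag N RF‖ ≤
      ‖RG - RF‖ * ∑ k ∈ range N, ‖RG‖ ^ k := by
  rw [one_sub_inv_pararealBidiag_mul, norm_smul, norm_sub_rev]
  gcongr
  refine (norm_sum_le _ _).trans (sum_le_sum fun k _ => ?_)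
  rw [norm_smul, norm_pow]
  exact mul_le_of_le_one_right (by positivity) (linfty_opNorm_shift_pow_le _ _)

theorem geom_sum_le_mul_pow {R : Type*} [Semiring R] [PartialOrder R] [IsOrderedRing R]
    {x B : R} (hx : 0 ≤ x) (hxB : x ≤ B) (hB : 1 ≤ B) (n : ℕ) :
    ∑ k ∈ range n, x ^ k ≤ n * B ^ (n - 1) := by
  have hterm : ∀ k ∈ range n, x ^ k ≤ B ^ (n - 1) := fun k hk =>
    (pow_le_pow_left₀ hx hxB k).trans (pow_le_pow_right₀ hB (by rw [mem_range] at hk; omega))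
  simpa [nsmul_eq_mul] using sum_le_card_nsmul _ _ _ hterm

theorem parareal_convergence_region_scaling_general (Np Ng q : ℕ) (C₁ C₂ r₁ r₂ : ℝ) (hC₁ : 0 ≤ C₁)
    (hr₁ : 0 ≤ r₁) (hr₂ : 0 ≤ r₂) (θ : ℝ) (hθ : θ = (r₁ + r₂) / Ng)
    (RG RF : ℂ) (hRG : ‖RG‖ ≤ 1 + C₁ * θ ^ q)
    (hdiff : ‖RG - RF‖ ≤ C₂ * θ ^ q)
    (MG MF : Matrix (Fin (Np + 1)) (Fin (Np + 1)) ℂ)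
    (hMG : MG = pararealBidiag Np RG) (hMF : MF = pararealBidiag Np RF)
    (E : Matrix (Fin (Np + 1)) (Fin (Np + 1)) ℂ) (hE : E = 1 - MG⁻¹ * MF) :
    rowSumNorm E ≤ Np * C₂ * θ ^ q * (1 + C₁ * θ ^ q) ^ (Np - 1) ∧
    (Np * C₂ * θ ^ q * (1 + C₁ * θ ^ q) ^ (Np - 1) < 1 → rowSumNorm E < 1) := by
  have hθ₀ : 0 ≤ θ := hθ ▸ by positivity
  have hgrowth : 1 ≤ 1 + C₁ * θ ^ q := le_add_of_nonneg_right (by positivity)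
  have hbound : rowSumNorm E ≤ Np * C₂ * θ ^ q * (1 + C₁ * θ ^ q) ^ (Np - 1) :=
    calc rowSumNorm E ≤ ‖RG - RF‖ * ∑ k ∈ range Np, ‖RG‖ ^ k := by
          rw [rowSumNorm_eq_linfty_opNorm, hE, hMG, hMF]
          exact linfty_opNorm_one_sub_inv_pararealBidiag_mul_le Np RG RF
      _ ≤ C₂ * θ ^ q * (Np * (1 + C₁ * θ ^ q) ^ (Np - 1)) :=
          mul_le_mul hdiff (geom_sum_le_mul_pow (norm_nonneg _) hRG hgrowth Np)
            (by positivity) ((norm_nonneg _).trans hdiff)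
      _ = Np * C₂ * θ ^ q * (1 + C₁ * θ ^ q) ^ (Np - 1) := by ring
  exact ⟨hbound, hbound.trans_lt⟩

theorem parareal_convergence_region_scaling (Np Ng q : ℕ) (hNp : 1 ≤ Np) (hNg : 1 ≤ Ng)
    (hq : 1 ≤ q) (C₁ C₂ r₁ r₂ : ℝ) (hC₁ : 0 ≤ C₁) (hC₂ : 0 ≤ C₂) (hr₁ : 0 ≤ r₁)
    (hr₂ : 0 ≤ r₂) (θ : ℝ) (hθ : θ = (r₁ + r₂) / Ng)
    (RG RF : ℂ) (hRG : ‖RG‖ ≤ 1 + C₁ * θ ^ q)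
    (hdiff : ‖RG - RF‖ ≤ C₂ * θ ^ q)
    (MG MF : Matrix (Fin (Np + 1)) (Fin (Np + 1)) ℂ)
    (hMG : MG = pararealBidiag Np RG) (hMF : MF = pararealBidiag Np RF)
    (E : Matrix (Fin (Np + 1)) (Fin (Np + 1)) ℂ) (hE : E = 1 - MG⁻¹ * MF) :
    rowSumNorm E ≤ Np * C₂ * θ ^ q * (1 + C₁ * θ ^ q) ^ (Np - 1) ∧
    (Np * C₂ * θ ^ q * (1 + C₁ * θ ^ q) ^ (Np - 1) < 1 → rowSumNorm E < 1) :=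
  parareal_convergence_region_scaling_general Np Ng q C₁ C₂ r₁ r₂ hC₁ hr₁ hr₂ θ hθ RG RF hRG hdiff
    MG MF hMG hMF E hE
end
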